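/- arXiv:2509.07921 — 3 statements merged into one kernel-verified Lean document; each statement's English description precedes it below -/
import Mathlib

section
/- The string differential on the middle algebra squares to zero: δ^M_str ∘ δ^M_str = 0 on A^M. -/
/-!
Over `𝔽₂` the square `D ∘ D` of a derivation is again a derivation, since the cross terms
`2 • D a * D b` vanish; so it suffices to check `D (D x) = 0` on generators. For a β-generator this
is `D (β ^ 2) = 2 • β * D β = 0`. For the α-generators of one side, collect them into the strictly
upper triangular matrix `M` and put `Γ = diagonal γ`. Then `D M = Γ M + M Γ + M ^ 2`, and
`D Γ = Γ ^ 2` because each `γ_i` is a sum of β-generators and squaring is additive in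
characteristic two. Applying `D` once more with the Leibniz rule, every monomial in `Γ` and `M`
occurs exactly twice, hence `D (D M) = 0`.
-/

open MvPolynomial

/-- Raw generator names for the middle algebra. -/
inductive MGenRaw (n : ℕ) : Type
  | aL (i j : Fin n) : MGenRaw n
  | aR (i j : Fin n) : MGenRaw n
  | bL (i j : Fin n) : MGenRaw n
  | bR (i j : Fin n) : MGenRaw n

/-- Validity of a raw generator name, given the two pairings. -/
def MGenValid {n : ℕ} (sL sR : Equiv.Perm (Fin n)) : MGenRaw n → Prop
  | .aL i j => i < j
  | .aR i j => i < j
  | .bL i j => i < j ∧ sL i = j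
  | .bR i j => i < j ∧ sR i = j

/-- Generators of the middle algebra `A^M`. -/
def MGen (n : ℕ) (sL sR : Equiv.Perm (Fin n)) : Type :=
  {g : MGenRaw n // MGenValid sL sR g}

/-- The middle algebra `A^M`: the free commutative unital `𝔽₂`-algebra on the generators. -/
abbrev AM (n : ℕ) (sL sR : Equiv.Perm (Fin n)) : Type :=
  MvPolynomial (MGen n sL sR) (ZMod 2)

/-- The generator `α^L_{ij}` (or `0` if `¬ i < j`). -/
noncomputable def genAL {n : ℕ} (sL sR : Equiv.Perm (Fin n)) (i j : Fin n) : AM n sL sR :=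
  if h : i < j then X (⟨MGenRaw.aL i j, h⟩ : MGen n sL sR) else 0

/-- The generator `α^R_{ij}` (or `0` if `¬ i < j`). -/
noncomputable def genAR {n : ℕ} (sL sR : Equiv.Perm (Fin n)) (i j : Fin n) : AM n sL sR :=
  if h : i < j then X (⟨MGenRaw.aR i j, h⟩ : MGen n sL sR) else 0

/-- The generator `β^L_{ij}` (or `0` if invalid). -/
noncomputable def genBL {n : ℕ} (sL sR : Equiv.Perm (Fin n)) (i j : Fin n) : AM n sL sR :=
  if h : i < j ∧ sL i = j then X (⟨MGenRaw.bL i j, h⟩ : MGen n sL sR) else 0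

/-- The generator `β^R_{ij}` (or `0` if invalid). -/
noncomputable def genBR {n : ℕ} (sL sR : Equiv.Perm (Fin n)) (i j : Fin n) : AM n sL sR :=
  if h : i < j ∧ sR i = j then X (⟨MGenRaw.bR i j, h⟩ : MGen n sL sR) else 0

/-- The path `1, β^R(1), β^L(β^R(1)), …` (with `1` rendered as `0 : Fin n`). -/
def pathSeq {n : ℕ} [NeZero n] (sL sR : Equiv.Perm (Fin n)) : ℕ → Fin n
  | 0 => 0
  | k + 1 => if k % 2 = 0 then sR (pathSeq sL sR k) else sL (pathSeq sL sR k)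

/-- The β-generator traversed at step `k` of the path (indices in increasing order). -/
noncomputable def stepGen {n : ℕ} [NeZero n] (sL sR : Equiv.Perm (Fin n)) (k : ℕ) :
    AM n sL sR :=
  if k % 2 = 0 then
    genBR sL sR (min (pathSeq sL sR k) (pathSeq sL sR (k + 1)))
      (max (pathSeq sL sR k) (pathSeq sL sR (k + 1)))
  else
    genBL sL sR (min (pathSeq sL sR k) (pathSeq sL sR (k + 1)))
      (max (pathSeq sL sR k) (pathSeq sL sR (k + 1)))

/-- `γ_i`: the sum of the β-generators along the path from `1` to the first occurrence of `i`. -/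
noncomputable def gammaEl {n : ℕ} [NeZero n] (sL sR : Equiv.Perm (Fin n))
    (hvisit : ∀ i : Fin n, ∃ m, pathSeq sL sR m = i) (i : Fin n) : AM n sL sR :=
  ∑ k ∈ Finset.range (Nat.find (hvisit i)), stepGen sL sR k

/-- Values of the string differential `δ^M_str` on generators. -/
noncomputable def deltaStrVal {n : ℕ} [NeZero n] (sL sR : Equiv.Perm (Fin n))
    (hvisit : ∀ i : Fin n, ∃ m, pathSeq sL sR m = i) : MGen n sL sR → AM n sL sR :=
  fun g =>
    match g.1 with
    | .aR i j =>
        (gammaEl sL sR hvisit i + gammaEl sL sR hvisit j) * genAR sL sR i j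
          + ∑ k : Fin n, if i < k ∧ k < j then genAR sL sR i k * genAR sL sR k j else 0
    | .aL i j =>
        (gammaEl sL sR hvisit i + gammaEl sL sR hvisit j) * genAL sL sR i j
          + ∑ k : Fin n, if i < k ∧ k < j then genAL sL sR i k * genAL sL sR k j else 0
    | .bR i j => genBR sL sR i j ^ 2
    | .bL i j => genBL sL sR i j ^ 2

/-- The common value of `d^M_SFT` on the β-generators `β^x_{ij}`. -/
noncomputable def betaSFTVal {n : ℕ} (sL sR : Equiv.Perm (Fin n)) (i j : Fin n) : AM n sL sR :=
  (∑ k : Fin n, if k < i then genAL sL sR k i * genAR sL sR k i else 0)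
    + (∑ k : Fin n, if i < k ∧ k ≠ j then genAL sL sR i k * genAR sL sR i k else 0)
    + (∑ k : Fin n, if k < j ∧ k ≠ i then genAL sL sR k j * genAR sL sR k j else 0)
    + (∑ k : Fin n, if j < k then genAL sL sR j k * genAR sL sR j k else 0)

/-- Values of the SFT differential `d^M_SFT` on generators. -/
noncomputable def dSFTVal {n : ℕ} (sL sR : Equiv.Perm (Fin n)) : MGen n sL sR → AM n sL sR :=
  fun g =>
    match g.1 with
    | .aR i j =>
        (∑ k : Fin n, if j < k then genAR sL sR i k * genAL sL sR j k else 0)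
          + (∑ k : Fin n, if k < i then genAR sL sR k j * genAL sL sR k i else 0)
    | .aL i j =>
        (∑ k : Fin n, if j < k then genAL sL sR i k * genAR sL sR j k else 0)
          + (∑ k : Fin n, if k < i then genAL sL sR k j * genAR sL sR k i else 0)
    | .bL i j => betaSFTVal sL sR i j
    | .bR i j => betaSFTVal sL sR i j

/-- The prescribed values of the SFT bracket on pairs of generators. -/
noncomputable def mBrVal {n : ℕ} (sL sR : Equiv.Perm (Fin n)) :
    MGen n sL sR → MGen n sL sR → AM n sL sR :=
  fun g g' =>
    match g.1, g'.1 with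
    | .aL i j, .aL k l =>
        if j = k then genAL sL sR i l else if i = l then genAL sL sR k j else 0
    | .aR i j, .aR k l =>
        if j = k then genAR sL sR i l else if i = l then genAR sL sR k j else 0
    | .aL i j, .bL k l =>
        if Xor (i = k ∨ i = l) (j = k ∨ j = l) then genAL sL sR i j else 0
    | .bL k l, .aL i j =>
        if Xor (i = k ∨ i = l) (j = k ∨ j = l) then genAL sL sR i j else 0
    | .aR i j, .bR k l =>
        if Xor (i = k ∨ i = l) (j = k ∨ j = l) then genAR sL sR i j else 0
    | .bR k l, .aR i j =>
        if Xor (i = k ∨ i = l) (j = k ∨ j = l) then genAR sL sR i j else 0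
    | _, _ => 0

/-- `Br` is *the* SFT bracket: the symmetric `𝔽₂`-bilinear operation on `A^M` satisfying the
Leibniz rule in each variable and taking the prescribed values on generators. -/
def IsSFTBracket {n : ℕ} (sL sR : Equiv.Perm (Fin n))
    (Br : AM n sL sR → AM n sL sR → AM n sL sR) : Prop :=
  (∀ x y, Br x y = Br y x) ∧
    (∀ x y z, Br x (y + z) = Br x y + Br x z) ∧
    (∀ x y z, Br x (y * z) = Br x y * z + y * Br x z) ∧
    (∀ g g' : MGen n sL sR, Br (X g) (X g') = mBrVal sL sR g g')

/-- The Hamiltonian `h^M = Σ_{i<j} α^L_{ij} α^R_{ij}`. -/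
noncomputable def hamM {n : ℕ} (sL sR : Equiv.Perm (Fin n)) : AM n sL sR :=
  ∑ i : Fin n, ∑ j : Fin n, if i < j then genAL sL sR i j * genAR sL sR i j else 0

/-- The quadratic Hamiltonian `h^M_2`. -/
noncomputable def hamM2 {n : ℕ} (sL sR : Equiv.Perm (Fin n)) : AM n sL sR :=
  (∑ i : Fin n, ∑ k : Fin n, ∑ j : Fin n,
      if i < k ∧ k < j then genAR sL sR i k * genAR sL sR k j * genAL sL sR i j else 0)
    + (∑ i : Fin n, ∑ k : Fin n, ∑ j : Fin n,
      if i < k ∧ k < j then genAL sL sR i k * genAL sL sR k j * genAR sL sR i j else 0)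

/-- Maslov weights of generators, given a Maslov potential `μ`. -/
def mWeight {n : ℕ} (sL sR : Equiv.Perm (Fin n)) (μ : Fin n → ℤ) : MGen n sL sR → ℤ :=
  fun g =>
    match g.1 with
    | .aL i j => μ i - μ j - 1
    | .aR i j => μ j - μ i - 1
    | .bL _ _ => -1
    | .bR _ _ => -1

theorem Matrix.of_mul_of_apply_of_strictlyUpper {ι A : Type*} [Fintype ι] [LinearOrder ι]
    [NonUnitalNonAssocSemiring A] (f : ι → ι → A) (hf : ∀ i j, ¬ i < j → f i j = 0)
    (i j : ι) :
    (Matrix.of f * Matrix.of f) i j = ∑ k, if i < k ∧ k < j then f i k * f k j else 0 := by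
  refine Finset.sum_congr rfl fun k _ => ?_
  split_ifs with hk
  · rfl
  · rcases not_and_or.1 hk with hik | hkj
    · simp [hf i k hik]
    · simp [hf k j hkj]

namespace Derivation

section Matrix

variable {R A : Type*} [CommSemiring R] [CommSemiring A] [Algebra R A] (D : Derivation R A A)

theorem matrix_map_mul {l m o : Type*} [Fintype m] (L : Matrix l m A) (N : Matrix m o A) :
    (L * N).map D = L.map D * N + L * N.map D := by
  ext i k
  simp only [Matrix.map_apply, Matrix.mul_apply, Matrix.add_apply, map_sum, leibniz, smul_eq_mul,
    ← Finset.sum_add_distrib]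
  exact Finset.sum_congr rfl fun j _ => by ring

end Matrix

section CharTwo

variable {R A : Type*} [CommSemiring R] [CommRing A] [Algebra R A] [CharP A 2]
  (D : Derivation R A A)

theorem map_sq_eq_zero_of_charTwo (a : A) : D (a ^ 2) = 0 := by
  rw [sq, leibniz, smul_eq_mul, CharTwo.add_self_eq_zero]

theorem map_sum_eq_sq_of_charTwo {ι : Type*} (s : Finset ι) (f : ι → A)
    (h : ∀ i ∈ s, D (f i) = f i ^ 2) : D (∑ i ∈ s, f i) = (∑ i ∈ s, f i) ^ 2 := by
  rw [map_sum, CharTwo.sum_sq]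
  exact Finset.sum_congr rfl h

def compSelf : Derivation R A A :=
  mk' (D.toLinearMap ∘ₗ D.toLinearMap) fun a b => by
    show D (D (a * b)) = a * D (D b) + b * D (D a)
    rw [leibniz, smul_eq_mul, smul_eq_mul, map_add, leibniz, leibniz, smul_eq_mul, smul_eq_mul,
      smul_eq_mul, smul_eq_mul]
    linear_combination (D a * D b) * (CharTwo.two_eq_zero (R := A))

theorem matrix_map_map_eq_zero {ι : Type*} [Fintype ι] [DecidableEq ι] (γ : ι → A)
    (M : Matrix ι ι A) (hγ : ∀ i, D (γ i) = γ i ^ 2)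
    (hM : M.map D = Matrix.diagonal γ * M + M * Matrix.diagonal γ + M * M) :
    (M.map D).map D = 0 := by
  set G := Matrix.diagonal γ
  have hG : G.map D = G * G := by
    rw [Matrix.diagonal_map (map_zero D), Matrix.diagonal_mul_diagonal]
    simp only [hγ, sq]
  have htwo : ∀ N : Matrix ι ι A, N + N = 0 := fun N => by
    ext i j; exact CharTwo.add_self_eq_zero (N i j)
  rw [hM]
  simp only [Matrix.map_add D (map_add D), matrix_map_mul, hM, hG]
  rw [← htwo (G * G * M + G * M * G + G * (M * M) + M * G * G + M * M * G + M * G * M + M * M * M)]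
  noncomm_ring

theorem map_map_apply_eq_zero_of_strictlyUpper {ι : Type*} [Fintype ι] [LinearOrder ι]
    (γ : ι → A) (f : ι → ι → A)
    (hf : ∀ i j, ¬ i < j → f i j = 0) (hγ : ∀ i, D (γ i) = γ i ^ 2)
    (hD : ∀ i j, i < j →
      D (f i j) = (γ i + γ j) * f i j + ∑ k, if i < k ∧ k < j then f i k * f k j else 0)
    (i j : ι) : D (D (f i j)) = 0 := by
  have hM : (Matrix.of f).map D = Matrix.diagonal γ * Matrix.of f
      + Matrix.of f * Matrix.diagonal γ + Matrix.of f * Matrix.of f := by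
    ext a b
    rw [Matrix.add_apply, Matrix.add_apply, Matrix.diagonal_mul, Matrix.mul_diagonal,
      Matrix.of_mul_of_apply_of_strictlyUpper f hf, Matrix.map_apply, Matrix.of_apply]
    by_cases hab : a < b
    · rw [hD a b hab]; ring
    · have hk : ∀ k, ¬ (a < k ∧ k < b) := fun k hk => hab (hk.1.trans hk.2)
      simp [hf a b hab, hk]
  exact congrFun₂ (D.matrix_map_map_eq_zero γ _ hγ hM) i j

end CharTwo

end Derivation

theorem MvPolynomial.derivation_map_map_eq_zero {R σ : Type*} [CommRing R] [CharP R 2]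
    (D : Derivation R (MvPolynomial σ R) (MvPolynomial σ R)) (h : ∀ s, D (D (X s)) = 0)
    (p : MvPolynomial σ R) : D (D p) = 0 := by
  have : D.compSelf = 0 := MvPolynomial.derivation_ext h
  exact congrArg (fun E : Derivation R _ _ => E p) this

section MiddleAlgebra

variable {n : ℕ} {sL sR : Equiv.Perm (Fin n)} {i j : Fin n}

theorem genAR_of_lt (h : i < j) : genAR sL sR i j = X ⟨.aR i j, h⟩ := dif_pos h

theorem genAR_of_not_lt (h : ¬ i < j) : genAR sL sR i j = 0 := dif_neg h

theorem genAL_of_lt (h : i < j) : genAL sL sR i j = X ⟨.aL i j, h⟩ := dif_pos h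

theorem genAL_of_not_lt (h : ¬ i < j) : genAL sL sR i j = 0 := dif_neg h

theorem genBR_of_valid (h : i < j ∧ sR i = j) : genBR sL sR i j = X ⟨.bR i j, h⟩ := dif_pos h

theorem genBR_of_not_valid (h : ¬ (i < j ∧ sR i = j)) : genBR sL sR i j = 0 := dif_neg h

theorem genBL_of_valid (h : i < j ∧ sL i = j) : genBL sL sR i j = X ⟨.bL i j, h⟩ := dif_pos h

theorem genBL_of_not_valid (h : ¬ (i < j ∧ sL i = j)) : genBL sL sR i j = 0 := dif_neg h

variable [NeZero n] {hvisit : ∀ i : Fin n, ∃ m, pathSeq sL sR m = i}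
  {D : Derivation (ZMod 2) (AM n sL sR) (AM n sL sR)}

theorem map_genBR (hD : ∀ g, D (X g) = deltaStrVal sL sR hvisit g) (i j : Fin n) :
    D (genBR sL sR i j) = genBR sL sR i j ^ 2 := by
  by_cases h : i < j ∧ sR i = j
  · have hX := hD ⟨.bR i j, h⟩
    rw [← genBR_of_valid h] at hX
    exact hX
  · simp [genBR_of_not_valid h]

theorem map_genBL (hD : ∀ g, D (X g) = deltaStrVal sL sR hvisit g) (i j : Fin n) :
    D (genBL sL sR i j) = genBL sL sR i j ^ 2 := by
  by_cases h : i < j ∧ sL i = j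
  · have hX := hD ⟨.bL i j, h⟩
    rw [← genBL_of_valid h] at hX
    exact hX
  · simp [genBL_of_not_valid h]

theorem map_gammaEl (hD : ∀ g, D (X g) = deltaStrVal sL sR hvisit g) (i : Fin n) :
    D (gammaEl sL sR hvisit i) = gammaEl sL sR hvisit i ^ 2 := by
  refine D.map_sum_eq_sq_of_charTwo _ _ fun k _ => ?_
  unfold stepGen
  split_ifs
  exacts [map_genBR hD _ _, map_genBL hD _ _]

theorem map_map_genAR (hD : ∀ g, D (X g) = deltaStrVal sL sR hvisit g) (i j : Fin n) :
    D (D (genAR sL sR i j)) = 0 := by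
  refine D.map_map_apply_eq_zero_of_strictlyUpper (gammaEl sL sR hvisit) _
    (fun _ _ => genAR_of_not_lt) (map_gammaEl hD) (fun a b hab => ?_) i j
  have hX := hD ⟨.aR a b, hab⟩
  rw [← genAR_of_lt hab] at hX
  exact hX

theorem map_map_genAL (hD : ∀ g, D (X g) = deltaStrVal sL sR hvisit g) (i j : Fin n) :
    D (D (genAL sL sR i j)) = 0 := by
  refine D.map_map_apply_eq_zero_of_strictlyUpper (gammaEl sL sR hvisit) _
    (fun _ _ => genAL_of_not_lt) (map_gammaEl hD) (fun a b hab => ?_) i j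
  have hX := hD ⟨.aL a b, hab⟩
  rw [← genAL_of_lt hab] at hX
  exact hX

end MiddleAlgebra

theorem middle_deltaStr_squared_zero_general {n : ℕ} [NeZero n]
    (sL sR : Equiv.Perm (Fin n))
    (hvisit : ∀ i : Fin n, ∃ m, pathSeq sL sR m = i)
    (Dstr : Derivation (ZMod 2) (AM n sL sR) (AM n sL sR))
    (hDstr : ∀ g : MGen n sL sR, Dstr (X g) = deltaStrVal sL sR hvisit g) :
    ∀ x : AM n sL sR, Dstr (Dstr x) = 0 := by
  refine MvPolynomial.derivation_map_map_eq_zero Dstr fun ⟨g, hg⟩ => ?_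
  cases g with
  | aL i j => rw [← genAL_of_lt hg]; exact map_map_genAL hDstr i j
  | aR i j => rw [← genAR_of_lt hg]; exact map_map_genAR hDstr i j
  | bL i j => rw [← genBL_of_valid hg, map_genBL hDstr, Dstr.map_sq_eq_zero_of_charTwo]
  | bR i j => rw [← genBR_of_valid hg, map_genBR hDstr, Dstr.map_sq_eq_zero_of_charTwo]

/-- The string differential on the middle algebra squares to zero. -/
theorem middle_deltaStr_squared_zero {n : ℕ} [NeZero n] (hn2 : 2 ≤ n) (hnEven : Even n)
    (sL sR : Equiv.Perm (Fin n))
    (hsLne : ∀ i, sL i ≠ i) (hsLinv : ∀ i, sL (sL i) = i)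
    (hsRne : ∀ i, sR i ≠ i) (hsRinv : ∀ i, sR (sR i) = i)
    (hvisit : ∀ i : Fin n, ∃ m, pathSeq sL sR m = i)
    (Dstr : Derivation (ZMod 2) (AM n sL sR) (AM n sL sR))
    (hDstr : ∀ g : MGen n sL sR, Dstr (X g) = deltaStrVal sL sR hvisit g) :
    ∀ x : AM n sL sR, Dstr (Dstr x) = 0 :=
  middle_deltaStr_squared_zero_general sL sR hvisit Dstr hDstr
end

section
/- The string differential of the Hamiltonian equals the quadratic Hamiltonian: δ^M_str(h^M) = h^M_2. -/
open MvPolynomial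

/-!
Each summand `α^L_{ij} α^R_{ij}` of `h^M` is differentiated by the Leibniz rule. The two factors
carry the same twist `(γ_i + γ_j)`, so the twists contribute `2 (γ_i + γ_j) α^L_{ij} α^R_{ij} = 0`
over `𝔽₂`; what survives is exactly the `(i, k, j)`-terms of `h^M_2`.
-/

theorem Derivation.map_mul_eq_of_charTwo {R A : Type*} [CommSemiring R] [CommRing A]
    [Algebra R A] [CharP A 2] (D : Derivation R A A) {a b g s t : A}
    (ha : D a = g * a + s) (hb : D b = g * b + t) :
    D (a * b) = s * b + t * a := by
  rw [D.leibniz, ha, hb, smul_eq_mul, smul_eq_mul]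
  linear_combination CharTwo.add_self_eq_zero (g * a * b)

theorem sum_ite_lt_and_lt_eq_zero {α M : Type*} [Preorder α] [DecidableLT α] [Fintype α]
    [AddCommMonoid M] {i j : α} (h : ¬ i < j) (f : α → M) :
    (∑ k, if i < k ∧ k < j then f k else 0) = 0 :=
  Finset.sum_eq_zero fun _ _ => if_neg fun hk => h (hk.1.trans hk.2)

section StringDifferential

variable {n : ℕ} [NeZero n] {sL sR : Equiv.Perm (Fin n)}
  {hvisit : ∀ i : Fin n, ∃ m, pathSeq sL sR m = i}
  {Dstr : Derivation (ZMod 2) (AM n sL sR) (AM n sL sR)}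

theorem deltaStr_genAL (hDstr : ∀ g, Dstr (X g) = deltaStrVal sL sR hvisit g) (i j : Fin n) :
    Dstr (genAL sL sR i j)
      = (gammaEl sL sR hvisit i + gammaEl sL sR hvisit j) * genAL sL sR i j
        + ∑ k, if i < k ∧ k < j then genAL sL sR i k * genAL sL sR k j else 0 := by
  by_cases h : i < j
  · conv_lhs => rw [genAL, dif_pos h]
    exact hDstr ⟨.aL i j, h⟩
  · simp only [genAL, dif_neg h, map_zero, mul_zero, sum_ite_lt_and_lt_eq_zero h, add_zero]

theorem deltaStr_genAR (hDstr : ∀ g, Dstr (X g) = deltaStrVal sL sR hvisit g) (i j : Fin n) :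
    Dstr (genAR sL sR i j)
      = (gammaEl sL sR hvisit i + gammaEl sL sR hvisit j) * genAR sL sR i j
        + ∑ k, if i < k ∧ k < j then genAR sL sR i k * genAR sL sR k j else 0 := by
  by_cases h : i < j
  · conv_lhs => rw [genAR, dif_pos h]
    exact hDstr ⟨.aR i j, h⟩
  · simp only [genAR, dif_neg h, map_zero, mul_zero, sum_ite_lt_and_lt_eq_zero h, add_zero]

theorem deltaStr_genAL_mul_genAR (hDstr : ∀ g, Dstr (X g) = deltaStrVal sL sR hvisit g)
    (i j : Fin n) :
    Dstr (genAL sL sR i j * genAR sL sR i j)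
      = (∑ k, if i < k ∧ k < j then
          genAR sL sR i k * genAR sL sR k j * genAL sL sR i j else 0)
        + ∑ k, if i < k ∧ k < j then
          genAL sL sR i k * genAL sL sR k j * genAR sL sR i j else 0 := by
  rw [Dstr.map_mul_eq_of_charTwo (deltaStr_genAL hDstr i j) (deltaStr_genAR hDstr i j),
    add_comm]
  simp only [Finset.sum_mul, ite_mul, zero_mul]

end StringDifferential

theorem hamM_eq_sum {n : ℕ} (sL sR : Equiv.Perm (Fin n)) :
    hamM sL sR = ∑ i, ∑ j, genAL sL sR i j * genAR sL sR i j :=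
  Fintype.sum_congr _ _ fun i => Fintype.sum_congr _ _ fun j => by
    by_cases h : i < j
    · rw [if_pos h]
    · rw [if_neg h, genAL, dif_neg h, zero_mul]

theorem middle_deltaStr_ham_general {n : ℕ} [NeZero n]
    (sL sR : Equiv.Perm (Fin n))
    (hvisit : ∀ i : Fin n, ∃ m, pathSeq sL sR m = i)
    (Dstr : Derivation (ZMod 2) (AM n sL sR) (AM n sL sR))
    (hDstr : ∀ g : MGen n sL sR, Dstr (X g) = deltaStrVal sL sR hvisit g) :
    Dstr (hamM sL sR) = hamM2 sL sR := by
  simp only [hamM_eq_sum, map_sum, deltaStr_genAL_mul_genAR hDstr, Finset.sum_add_distrib]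
  rw [hamM2]
  congr 1 <;> exact Fintype.sum_congr _ _ fun i => Finset.sum_comm

/-- `δ^M_str(h^M) = h^M_2`. -/
theorem middle_deltaStr_ham {n : ℕ} [NeZero n] (hn2 : 2 ≤ n) (hnEven : Even n)
    (sL sR : Equiv.Perm (Fin n))
    (hsLne : ∀ i, sL i ≠ i) (hsLinv : ∀ i, sL (sL i) = i)
    (hsRne : ∀ i, sR i ≠ i) (hsRinv : ∀ i, sR (sR i) = i)
    (hvisit : ∀ i : Fin n, ∃ m, pathSeq sL sR m = i)
    (Dstr : Derivation (ZMod 2) (AM n sL sR) (AM n sL sR))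
    (hDstr : ∀ g : MGen n sL sR, Dstr (X g) = deltaStrVal sL sR hvisit g) :
    Dstr (hamM sL sR) = hamM2 sL sR :=
  middle_deltaStr_ham_general sL sR hvisit Dstr hDstr
end

section
/- The SFT bracket on the left algebra satisfies the Jacobi identity: for all x, y, z ∈ A^L, {x, {y, z}} + {y, {z, x}} + {z, {x, y}} = 0. -/
/-
The bracket is a biderivation and, over `𝔽₂`, symmetric means skew, so the Jacobiator
`J(x, y, z)` is alternating and a derivation in each argument; hence it vanishes as soon as it
vanishes on triples of generators. On generators it is the Jacobi identity of a Lie algebra of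
matrices: `α_{ij}` behaves like the matrix unit `E_{ij}`, while `β_{kl}`, `p_c`, `q_c`, `t`, `t⁻¹`
act on every `α_{ij}` like a diagonal matrix, and bracket with one another to constants.
-/

open MvPolynomial

/-- Raw generator names for the left algebra `A^L`: `p_c`, `q_c` for `c ∈ C`, `α_{ij}`,
`β_{ij}`, and `t`, `t⁻¹`. -/
inductive LGenRaw (n : ℕ) (C : Type) : Type
  | p (c : C) : LGenRaw n C
  | q (c : C) : LGenRaw n C
  | a (i j : Fin n) : LGenRaw n C
  | b (i j : Fin n) : LGenRaw n C
  | t : LGenRaw n C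
  | tinv : LGenRaw n C

/-- Validity of a raw generator name, given the pairing `σ`. -/
def LGenValid {n : ℕ} {C : Type} (σ : Equiv.Perm (Fin n)) : LGenRaw n C → Prop
  | .a i j => i < j
  | .b i j => i < j ∧ σ i = j
  | _ => True

/-- Generators of the left algebra. -/
def LGen (n : ℕ) (C : Type) (σ : Equiv.Perm (Fin n)) : Type :=
  {g : LGenRaw n C // LGenValid σ g}

/-- The free commutative `𝔽₂`-algebra on the generators of `A^L`. -/
abbrev LPoly (n : ℕ) (C : Type) (σ : Equiv.Perm (Fin n)) : Type :=
  MvPolynomial (LGen n C σ) (ZMod 2)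

/-- The ideal imposing the single relation `t · t⁻¹ = 1`. -/
noncomputable def tRelIdeal (n : ℕ) (C : Type) (σ : Equiv.Perm (Fin n)) :
    Ideal (LPoly n C σ) :=
  Ideal.span {X (⟨LGenRaw.t, trivial⟩ : LGen n C σ) *
    X (⟨LGenRaw.tinv, trivial⟩ : LGen n C σ) - 1}

/-- The left algebra `A^L`: the commutative unital `𝔽₂`-algebra generated by
`p_c, q_c, α_{ij}, β_{ij}, t, t⁻¹` subject only to `t·t⁻¹ = 1`. -/
abbrev ALalg (n : ℕ) (C : Type) (σ : Equiv.Perm (Fin n)) : Type :=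
  LPoly n C σ ⧸ tRelIdeal n C σ

/-- The image of a generator in `A^L`. -/
noncomputable def lgen {n : ℕ} {C : Type} {σ : Equiv.Perm (Fin n)} (g : LGen n C σ) :
    ALalg n C σ :=
  Ideal.Quotient.mk (tRelIdeal n C σ) (X g)

/-- The generator `α_{ij}` of `A^L` (or `0` if `¬ i < j`). -/
noncomputable def lA {n : ℕ} (C : Type) (σ : Equiv.Perm (Fin n)) (i j : Fin n) :
    ALalg n C σ :=
  if h : i < j then lgen (⟨LGenRaw.a i j, h⟩ : LGen n C σ) else 0

/-- The prescribed values of the SFT bracket on `A^L` on pairs of generators. -/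
noncomputable def lBrVal {n : ℕ} {C : Type} [DecidableEq C] (σ : Equiv.Perm (Fin n)) :
    LGen n C σ → LGen n C σ → ALalg n C σ :=
  fun g g' =>
    match g.1, g'.1 with
    | .p c, .q c' => if c = c' then 1 else 0
    | .q c, .p c' => if c = c' then 1 else 0
    | .a i j, .a k l =>
        if j = k then lA C σ i l else if i = l then lA C σ k j else 0
    | .a i j, .b k l =>
        if Xor (i = k ∨ i = l) (j = k ∨ j = l) then lA C σ i j else 0
    | .b k l, .a i j =>
        if Xor (i = k ∨ i = l) (j = k ∨ j = l) then lA C σ i j else 0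
    | _, _ => 0

/-- `Br` is *the* SFT bracket on `A^L`: symmetric, `𝔽₂`-bilinear, satisfying the Leibniz
rule in each variable, and taking the prescribed values on generators. -/
def IsLSFTBracket {n : ℕ} {C : Type} [DecidableEq C] (σ : Equiv.Perm (Fin n))
    (Br : ALalg n C σ → ALalg n C σ → ALalg n C σ) : Prop :=
  (∀ x y, Br x y = Br y x) ∧
    (∀ x y z, Br x (y + z) = Br x y + Br x z) ∧
    (∀ x y z, Br x (y * z) = Br x y * z + y * Br x z) ∧
    (∀ g g' : LGen n C σ, Br (lgen g) (lgen g') = lBrVal σ g g')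

structure IsSkewBiderivation {A : Type*} [CommRing A] (Br : A → A → A) : Prop where
  skew : ∀ x y, Br y x = -Br x y
  map_add : ∀ x y z, Br x (y + z) = Br x y + Br x z
  leibniz : ∀ x y z, Br x (y * z) = Br x y * z + y * Br x z

def jacobiator {A : Type*} [Add A] (Br : A → A → A) (x y z : A) : A :=
  Br x (Br y z) + Br y (Br z x) + Br z (Br x y)

theorem Algebra.eq_zero_of_leibniz_of_adjoin_eq_top {S A : Type*} [CommRing S] [CommRing A]
    [Algebra S A] {s : Set A} (hs : Algebra.adjoin S s = ⊤) {D : A → A}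
    (map_add : ∀ x y, D (x + y) = D x + D y) (leibniz : ∀ x y, D (x * y) = D x * y + x * D y)
    (map_algebraMap : ∀ c, D (algebraMap S A c) = 0) (h : ∀ x ∈ s, D x = 0) (x : A) :
    D x = 0 := by
  have hx : x ∈ Algebra.adjoin S s := hs ▸ Algebra.mem_top
  induction hx using Algebra.adjoin_induction with
  | mem x hx => exact h x hx
  | algebraMap c => exact map_algebraMap c
  | add x y _ _ hx hy => rw [map_add, hx, hy, add_zero]
  | mul x y _ _ hx hy => rw [leibniz, hx, hy, zero_mul, mul_zero, add_zero]

theorem jacobiator_rotate {A : Type*} [AddCommSemigroup A] (Br : A → A → A) (x y z : A) :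
    jacobiator Br y z x = jacobiator Br x y z := by
  simp only [jacobiator]
  ac_rfl

namespace IsSkewBiderivation

variable {A : Type*} [CommRing A] {Br : A → A → A} (hBr : IsSkewBiderivation Br)
include hBr

theorem map_zero (x : A) : Br x 0 = 0 := by
  simpa using hBr.map_add x 0 0

theorem map_neg (x y : A) : Br x (-y) = -Br x y := by
  rw [eq_neg_iff_add_eq_zero, ← hBr.map_add, neg_add_cancel, hBr.map_zero]

theorem map_one (x : A) : Br x 1 = 0 := by
  simpa using hBr.leibniz x 1 1

theorem map_natCast (x : A) (m : ℕ) : Br x m = 0 := by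
  induction m with
  | zero => rw [Nat.cast_zero, hBr.map_zero]
  | succ m ih => rw [Nat.cast_succ, hBr.map_add, ih, hBr.map_one, add_zero]

theorem map_algebraMap_zmod {p : ℕ} [NeZero p] [Algebra (ZMod p) A] (x : A) (c : ZMod p) :
    Br x (algebraMap (ZMod p) A c) = 0 := by
  rw [← ZMod.natCast_zmod_val c, _root_.map_natCast, hBr.map_natCast]

theorem map_smul_zmod {p : ℕ} [Module (ZMod p) A] (x : A) (c : ZMod p) (y : A) :
    Br x (c • y) = c • Br x y :=
  ZMod.map_smul (AddMonoidHom.mk' (Br x) (hBr.map_add x)) c y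

theorem jacobiator_swap (x y z : A) : jacobiator Br y x z = -jacobiator Br x y z := by
  simp only [jacobiator, hBr.skew x y, hBr.skew z y, hBr.skew x z, hBr.map_neg]
  abel

theorem jacobiator_map_add (x y z w : A) :
    jacobiator Br x y (z + w) = jacobiator Br x y z + jacobiator Br x y w := by
  simp only [jacobiator, hBr.map_add, hBr.skew _ (z + w), hBr.skew _ z, hBr.skew _ w, hBr.map_neg]
  abel

theorem jacobiator_leibniz (x y z w : A) :
    jacobiator Br x y (z * w) = jacobiator Br x y z * w + z * jacobiator Br x y w := by
  simp only [jacobiator, hBr.leibniz, hBr.map_add, hBr.skew _ (z * w), hBr.skew _ z, hBr.skew _ w,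
    hBr.map_neg]
  ring

theorem jacobiator_eq_zero_of_adjoin_eq_top {S : Type*} [CommRing S] [Algebra S A] {s : Set A}
    (hs : Algebra.adjoin S s = ⊤) (map_algebraMap : ∀ x c, Br x (algebraMap S A c) = 0)
    (h : ∀ x ∈ s, ∀ y ∈ s, ∀ z ∈ s, jacobiator Br x y z = 0) (x y z : A) :
    jacobiator Br x y z = 0 := by
  have extend : ∀ x y, (∀ z ∈ s, jacobiator Br x y z = 0) → ∀ z, jacobiator Br x y z = 0 :=
    fun x y ↦ Algebra.eq_zero_of_leibniz_of_adjoin_eq_top hs (hBr.jacobiator_map_add x y)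
      (hBr.jacobiator_leibniz x y) fun c ↦ by
        simp only [jacobiator, map_algebraMap, hBr.map_zero, hBr.skew _ (algebraMap S A c),
          neg_zero, add_zero]
  have h₂ : ∀ x ∈ s, ∀ y ∈ s, ∀ z, jacobiator Br x y z = 0 :=
    fun x hx y hy ↦ extend x y (h x hx y hy)
  have h₁ : ∀ x ∈ s, ∀ y z, jacobiator Br x y z = 0 := fun x hx y ↦
    extend x y fun z hz ↦ by rw [jacobiator_rotate, h₂ z hz x hx]
  exact extend x y (fun z hz ↦ by rw [jacobiator_rotate, h₁ z hz]) z

theorem jacobiator_eq_zero_of_br_eq_zero_or_one {x y z : A} (hxy : Br x y = 0 ∨ Br x y = 1)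
    (hyz : Br y z = 0 ∨ Br y z = 1) (hzx : Br z x = 0 ∨ Br z x = 1) :
    jacobiator Br x y z = 0 := by
  have hconst : ∀ u v, (v = 0 ∨ v = 1) → Br u v = 0 := by
    rintro u v (rfl | rfl)
    exacts [hBr.map_zero u, hBr.map_one u]
  simp only [jacobiator, hconst _ _ hxy, hconst _ _ hyz, hconst _ _ hzx, add_zero]

end IsSkewBiderivation

section LeftAlgebra

variable {n : ℕ} {C : Type} {σ : Equiv.Perm (Fin n)}

theorem adjoin_range_lgen : Algebra.adjoin (ZMod 2) (Set.range (lgen (σ := σ) (C := C))) = ⊤ := by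
  have : Set.range (lgen (σ := σ) (C := C)) =
      Ideal.Quotient.mkₐ (ZMod 2) (tRelIdeal n C σ) '' Set.range X := by
    rw [← Set.range_comp]
    rfl
  rw [this, Algebra.adjoin_image, MvPolynomial.adjoin_range_X, Algebra.map_top,
    AlgHom.range_eq_top]
  exact Ideal.Quotient.mkₐ_surjective _ _

theorem lA_of_lt {i j : Fin n} (h : i < j) : lA C σ i j = lgen (⟨.a i j, h⟩ : LGen n C σ) :=
  dif_pos h

theorem lA_of_not_lt {i j : Fin n} (h : ¬i < j) : lA C σ i j = 0 :=
  dif_neg h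

def LGen.IsAlpha (g : LGen n C σ) : Prop := ∃ i j, g.1 = .a i j

theorem LGen.IsAlpha.exists_lgen_eq_lA {g : LGen n C σ} (hg : g.IsAlpha) :
    ∃ i j, i < j ∧ lgen g = lA C σ i j := by
  rcases g with ⟨g, hvalid⟩
  obtain ⟨i, j, rfl⟩ := hg
  exact ⟨i, j, hvalid, (lA_of_lt hvalid).symm⟩

/-- `y` acts on `α_{ij}` as the diagonal matrix `diag ε` acts on `E_{ij}` by commutator. -/
def ActsDiagonally (Br : ALalg n C σ → ALalg n C σ → ALalg n C σ) (y : ALalg n C σ)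
    (ε : Fin n → ZMod 2) : Prop :=
  ∀ i j, Br y (lA C σ i j) = (ε i - ε j) • lA C σ i j

variable [DecidableEq C]

theorem lBrVal_eq_zero_or_one {g g' : LGen n C σ} (hg : ¬g.IsAlpha) (hg' : ¬g'.IsAlpha) :
    lBrVal σ g g' = 0 ∨ lBrVal σ g g' = 1 := by
  rcases g with ⟨_ | _ | _ | _ | _ | _, _⟩ <;> rcases g' with ⟨_ | _ | _ | _ | _ | _, _⟩ <;>
    first
    | exact absurd ⟨_, _, rfl⟩ hg
    | exact absurd ⟨_, _, rfl⟩ hg'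
    | simp only [lBrVal]; first | split_ifs <;> simp | simp

variable {Br : ALalg n C σ → ALalg n C σ → ALalg n C σ}

theorem IsLSFTBracket.isSkewBiderivation (hBr : IsLSFTBracket σ Br) : IsSkewBiderivation Br where
  skew x y := by rw [ZModModule.neg_eq_self, hBr.1]
  map_add := hBr.2.1
  leibniz := hBr.2.2.1

theorem br_lgen_lgen_eq_zero_or_one (hBr : IsLSFTBracket σ Br) {g g' : LGen n C σ}
    (hg : ¬g.IsAlpha) (hg' : ¬g'.IsAlpha) :
    Br (lgen g) (lgen g') = 0 ∨ Br (lgen g) (lgen g') = 1 :=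
  hBr.2.2.2 g g' ▸ lBrVal_eq_zero_or_one hg hg'

/-- The sign is invisible over `𝔽₂`; with it, this is `⁅E_{ij}, E_{kl}⁆`, and the Jacobi
identities below cancel term by term. -/
theorem br_lA_lA (hBr : IsLSFTBracket σ Br) {i j k l : Fin n} (hij : i < j) (hkl : k < l) :
    Br (lA C σ i j) (lA C σ k l) =
      (if j = k then lA C σ i l else 0) - (if i = l then lA C σ k j else 0) := by
  rw [lA_of_lt hij, lA_of_lt hkl, ZModModule.sub_eq_add]
  refine (hBr.2.2.2 _ _).trans ?_
  simp only [lBrVal]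
  split_ifs <;> first | omega | simp

theorem br_lgen_lA (hBr : IsLSFTBracket σ Br) (g : LGen n C σ) (i j : Fin n) :
    Br (lgen g) (lA C σ i j) = if h : i < j then lBrVal σ g ⟨.a i j, h⟩ else 0 := by
  split_ifs with h
  · rw [lA_of_lt h]
    exact hBr.2.2.2 _ _
  · rw [lA_of_not_lt h, hBr.isSkewBiderivation.map_zero]

theorem exists_actsDiagonally_lgen (hBr : IsLSFTBracket σ Br) {g : LGen n C σ}
    (hg : ¬g.IsAlpha) : ∃ ε, ActsDiagonally Br (lgen g) ε := by
  rcases g with ⟨_ | _ | _ | ⟨k, l⟩ | _ | _, _⟩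
  case a => exact absurd ⟨_, _, rfl⟩ hg
  case b =>
    refine ⟨fun m ↦ if m = k ∨ m = l then 1 else 0, fun i j ↦ ?_⟩
    refine (br_lgen_lA hBr _ i j).trans ?_
    split_ifs with hij
    · simp only [lBrVal]
      by_cases hi : i = k ∨ i = l <;> by_cases hj : j = k ∨ j = l <;> simp [hi, hj]
    · rw [lA_of_not_lt hij, smul_zero]
  all_goals exact ⟨0, fun i j ↦ (br_lgen_lA hBr _ i j).trans <| by split_ifs <;> simp [lBrVal]⟩

theorem jacobiator_lA_lA_lA (hBr : IsLSFTBracket σ Br) {i j k l r s : Fin n} (hij : i < j)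
    (hkl : k < l) (hrs : r < s) :
    jacobiator Br (lA C σ i j) (lA C σ k l) (lA C σ r s) = 0 := by
  have hS := hBr.isSkewBiderivation
  simp only [jacobiator, br_lA_lA hBr hkl hrs, br_lA_lA hBr hrs hij, br_lA_lA hBr hij hkl,
    sub_eq_add_neg, hS.map_add, hS.map_neg, apply_ite (Br _), hS.map_zero]
  split_ifs <;> subst_vars <;> (try simp (disch := omega) only [br_lA_lA hBr]) <;>
    (try split_ifs) <;> first | omega | abel

theorem jacobiator_lA_lA_of_actsDiagonally (hBr : IsLSFTBracket σ Br) {i j k l : Fin n}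
    (hij : i < j) (hkl : k < l) {y : ALalg n C σ} {ε : Fin n → ZMod 2}
    (hy : ActsDiagonally Br y ε) :
    jacobiator Br (lA C σ i j) (lA C σ k l) y = 0 := by
  have hS := hBr.isSkewBiderivation
  unfold ActsDiagonally at hy
  simp only [jacobiator, hS.skew y, hy, hS.map_neg, hS.map_smul_zmod, br_lA_lA hBr hij hkl,
    br_lA_lA hBr hkl hij, sub_eq_add_neg, hS.map_add, apply_ite (Br y), hS.map_zero]
  split_ifs <;> subst_vars <;> first | omega | module

theorem jacobiator_lA_of_actsDiagonally (hBr : IsLSFTBracket σ Br) (i j : Fin n)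
    {y y' : ALalg n C σ} {ε ε' : Fin n → ZMod 2} (hy : ActsDiagonally Br y ε)
    (hy' : ActsDiagonally Br y' ε') (hyy' : Br y y' = 0 ∨ Br y y' = 1) :
    jacobiator Br (lA C σ i j) y y' = 0 := by
  have hS := hBr.isSkewBiderivation
  have hconst : Br (lA C σ i j) (Br y y') = 0 := by
    rcases hyy' with h | h <;> rw [h]
    exacts [hS.map_zero _, hS.map_one _]
  unfold ActsDiagonally at hy hy'
  simp only [jacobiator, hconst, hS.skew y, hy, hy', hS.map_neg, hS.map_smul_zmod]
  module

theorem jacobiator_lA_lgen_lgen (hBr : IsLSFTBracket σ Br) {i j : Fin n} (hij : i < j)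
    (g₂ g₃ : LGen n C σ) : jacobiator Br (lA C σ i j) (lgen g₂) (lgen g₃) = 0 := by
  have hS := hBr.isSkewBiderivation
  by_cases h₂ : g₂.IsAlpha <;> by_cases h₃ : g₃.IsAlpha
  · obtain ⟨k, l, hkl, hg₂⟩ := h₂.exists_lgen_eq_lA
    obtain ⟨r, s, hrs, hg₃⟩ := h₃.exists_lgen_eq_lA
    rw [hg₂, hg₃]
    exact jacobiator_lA_lA_lA hBr hij hkl hrs
  · obtain ⟨k, l, hkl, hg₂⟩ := h₂.exists_lgen_eq_lA
    obtain ⟨ε, hε⟩ := exists_actsDiagonally_lgen hBr h₃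
    rw [hg₂]
    exact jacobiator_lA_lA_of_actsDiagonally hBr hij hkl hε
  · obtain ⟨ε, hε⟩ := exists_actsDiagonally_lgen hBr h₂
    obtain ⟨r, s, hrs, hg₃⟩ := h₃.exists_lgen_eq_lA
    rw [hg₃, hS.jacobiator_swap, ← jacobiator_rotate,
      jacobiator_lA_lA_of_actsDiagonally hBr hij hrs hε, neg_zero]
  · obtain ⟨ε₂, hε₂⟩ := exists_actsDiagonally_lgen hBr h₂
    obtain ⟨ε₃, hε₃⟩ := exists_actsDiagonally_lgen hBr h₃
    exact jacobiator_lA_of_actsDiagonally hBr i j hε₂ hε₃ (br_lgen_lgen_eq_zero_or_one hBr h₂ h₃)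

theorem jacobiator_lgen (hBr : IsLSFTBracket σ Br) (g₁ g₂ g₃ : LGen n C σ) :
    jacobiator Br (lgen g₁) (lgen g₂) (lgen g₃) = 0 := by
  by_cases h₁ : g₁.IsAlpha
  · obtain ⟨i, j, hij, hg₁⟩ := h₁.exists_lgen_eq_lA
    rw [hg₁]
    exact jacobiator_lA_lgen_lgen hBr hij g₂ g₃
  by_cases h₂ : g₂.IsAlpha
  · obtain ⟨i, j, hij, hg₂⟩ := h₂.exists_lgen_eq_lA
    rw [← jacobiator_rotate, hg₂]
    exact jacobiator_lA_lgen_lgen hBr hij g₃ g₁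
  by_cases h₃ : g₃.IsAlpha
  · obtain ⟨i, j, hij, hg₃⟩ := h₃.exists_lgen_eq_lA
    rw [jacobiator_rotate, hg₃]
    exact jacobiator_lA_lgen_lgen hBr hij g₁ g₂
  exact hBr.isSkewBiderivation.jacobiator_eq_zero_of_br_eq_zero_or_one
    (br_lgen_lgen_eq_zero_or_one hBr h₁ h₂) (br_lgen_lgen_eq_zero_or_one hBr h₂ h₃)
    (br_lgen_lgen_eq_zero_or_one hBr h₃ h₁)

end LeftAlgebra

theorem left_bracket_jacobi_general {n : ℕ}
    (C : Type) [DecidableEq C]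
    (σ : Equiv.Perm (Fin n))
    (Br : ALalg n C σ → ALalg n C σ → ALalg n C σ)
    (hBr : IsLSFTBracket σ Br) :
    ∀ x y z : ALalg n C σ, Br x (Br y z) + Br y (Br z x) + Br z (Br x y) = 0 := by
  have hS := hBr.isSkewBiderivation
  refine hS.jacobiator_eq_zero_of_adjoin_eq_top adjoin_range_lgen hS.map_algebraMap_zmod ?_
  rintro _ ⟨g₁, rfl⟩ _ ⟨g₂, rfl⟩ _ ⟨g₃, rfl⟩
  exact jacobiator_lgen hBr g₁ g₂ g₃

/-- The SFT bracket on the left algebra satisfies the Jacobi identity. -/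
theorem left_bracket_jacobi {n : ℕ} (hn2 : 2 ≤ n) (hnEven : Even n)
    (C : Type) [Fintype C] [DecidableEq C]
    (σ : Equiv.Perm (Fin n)) (hσne : ∀ i, σ i ≠ i) (hσinv : ∀ i, σ (σ i) = i)
    (Br : ALalg n C σ → ALalg n C σ → ALalg n C σ)
    (hBr : IsLSFTBracket σ Br) :
    ∀ x y z : ALalg n C σ, Br x (Br y z) + Br y (Br z x) + Br z (Br x y) = 0 :=
  left_bracket_jacobi_general C σ Br hBr
end
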